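/- Suppose D : ℝ^{q×q} → ℝ^{q×q} is a linear operator with Hilbert–Schmidt norm ‖D‖ ≤ 1/10, and let I denote the identity operator. Then I + D = (I + P_{W⊥}(D) + M) ∘ 𝒲, where W = span{I ⊗ W₁ + W₂ ⊗ I : W₁, W₂ ∈ ℝ^{q×q}}, M is a linear operator with ‖M‖ ≤ 5‖D‖²/√q, and 𝒲 is a rank-preserving linear map of the form (I+E_R) ⊗ (I+E_L) satisfying ‖𝒲 − I‖₂ ≤ 3‖D‖/√q. -/

import Mathlib

/-!
Write `D = P + (X ↦ E_L X + X E_Rᵀ)` with `P = P_{W⊥}(D)`, moving a multiple of the identity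
from `E_R` to `E_L` so that `tr E_R = 0`. The two summands are orthogonal, and
`‖X ↦ E_L X + X E_Rᵀ‖² = q ‖E_L‖² + q ‖E_R‖² + 2 tr E_L tr E_R` loses its cross term, so
`‖E_L‖, ‖E_R‖ ≤ ‖D‖/√q`. With `L = (1 + E_L)⁻¹` and `R = (1 + E_R)⁻¹` (Neumann series,
`‖L - 1‖, ‖R - 1‖ ≤ (10/9) ‖D‖/√q`), the remainder `M = (I + D) ∘ 𝒲⁻¹ - I - P` is quadratically
small. Precomposing `P` costs only an operator-norm factor, because it acts on the rows of `P`
by `G ↦ Lᵀ G R`.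
-/

open Matrix Finset

/-- The Hilbert–Schmidt inner product of two operators on `ℝ^{q×q}`, computed in the
orthonormal basis of standard basis matrices (with the trace inner product on matrices). -/
noncomputable def hsInner (q : ℕ)
    (F G : Matrix (Fin q) (Fin q) ℝ → Matrix (Fin q) (Fin q) ℝ) : ℝ :=
  ∑ a : Fin q, ∑ b : Fin q,
    Matrix.trace ((F (Matrix.single a b 1))ᵀ * G (Matrix.single a b 1))

/-- The Hilbert–Schmidt (Euclidean) norm of an operator on `ℝ^{q×q}`. -/
noncomputable def hsNorm (q : ℕ)
    (F : Matrix (Fin q) (Fin q) ℝ → Matrix (Fin q) (Fin q) ℝ) : ℝ :=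
  Real.sqrt (hsInner q F F)

attribute [local instance] Matrix.frobeniusNormedAddCommGroup Matrix.frobeniusNormedRing
  Matrix.frobeniusNormedSpace

section NormedRing

variable {R : Type*} [NormedRing R]

theorem norm_mul_mul_sub_le (x g y : R) :
    ‖x * g * y - g‖ ≤ (‖x - 1‖ * ‖y - 1‖ + ‖x - 1‖ + ‖y - 1‖) * ‖g‖ := by
  have h : x * g * y - g = (x - 1) * g * (y - 1) + (x - 1) * g + g * (y - 1) := by noncomm_ring
  calc ‖x * g * y - g‖ ≤ ‖x - 1‖ * ‖g‖ * ‖y - 1‖ + ‖x - 1‖ * ‖g‖ + ‖g‖ * ‖y - 1‖ := by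
        rw [h]
        refine norm_add₃_le.trans (add_le_add_three ?_ (norm_mul_le _ _) (norm_mul_le _ _))
        exact (norm_mul_le _ _).trans (by gcongr; exact norm_mul_le _ _)
    _ = _ := by ring

theorem one_sub_norm_mul_norm_sub_one_le {e l : R} (h : l * (1 + e) = 1) :
    (1 - ‖e‖) * ‖l - 1‖ ≤ ‖e‖ := by
  have hl : l - 1 = -((l - 1) * e + e) := by
    rw [← sub_eq_zero, ← sub_eq_zero.mpr h]; noncomm_ring
  have : ‖l - 1‖ ≤ ‖l - 1‖ * ‖e‖ + ‖e‖ := by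
    conv_lhs => rw [hl, norm_neg]
    exact (norm_add_le _ _).trans (by gcongr; exact norm_mul_le _ _)
  linarith

theorem exists_mul_one_add_eq_one_of_norm_lt_one [HasSummableGeomSeries R] {e : R}
    (he : ‖e‖ < 1) : ∃ l : R, l * (1 + e) = 1 ∧ (1 - ‖e‖) * ‖l - 1‖ ≤ ‖e‖ := by
  set u := Units.oneSub (-e) (by rwa [norm_neg])
  have hu : (u : R) = 1 + e := sub_neg_eq_add 1 e
  have hl : (↑u⁻¹ : R) * (1 + e) = 1 := hu ▸ u.inv_mul
  exact ⟨_, hl, one_sub_norm_mul_norm_sub_one_le hl⟩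

end NormedRing

namespace Matrix

variable {m n : Type*} [Fintype m] [Fintype n]

theorem frobenius_norm_sq_eq_sum (A : Matrix m n ℝ) : ‖A‖ ^ 2 = ∑ i, ∑ j, A i j ^ 2 := by
  rw [frobenius_norm_def, ← Real.sqrt_eq_rpow, Real.sq_sqrt (by positivity)]
  simp

theorem trace_transpose_mul_eq_sum (A B : Matrix m n ℝ) :
    trace (Aᵀ * B) = ∑ i, ∑ j, A i j * B i j := by
  simp only [trace, diag, mul_apply, transpose_apply]
  exact Finset.sum_comm

theorem sqrt_trace_transpose_mul_self (A : Matrix m n ℝ) : √(trace (Aᵀ * A)) = ‖A‖ := by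
  simp only [trace_transpose_mul_eq_sum, ← sq, ← frobenius_norm_sq_eq_sum]
  exact Real.sqrt_sq (norm_nonneg _)

theorem norm_transpose_sub_one [DecidableEq n] (A : Matrix n n ℝ) : ‖Aᵀ - 1‖ = ‖A - 1‖ := by
  rw [← frobenius_norm_transpose (A - 1), transpose_sub, transpose_one]

end Matrix

section HilbertSchmidt

open scoped InnerProductSpace

local notation "𝕄" q:max => Matrix (Fin q) (Fin q) ℝ

variable {q : ℕ}

def hsVec (F : 𝕄 q → 𝕄 q) : EuclideanSpace ℝ ((Fin q × Fin q) × (Fin q × Fin q)) :=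
  WithLp.toLp 2 fun p => F (Matrix.single p.1.1 p.1.2 1) p.2.1 p.2.2

theorem hsNorm_nonneg (F : 𝕄 q → 𝕄 q) : 0 ≤ hsNorm q F := Real.sqrt_nonneg _

theorem hsInner_eq_inner (F G : 𝕄 q → 𝕄 q) : hsInner q F G = ⟪hsVec F, hsVec G⟫_ℝ := by
  simp [hsInner, hsVec, PiLp.inner_apply, Matrix.trace_transpose_mul_eq_sum, Fintype.sum_prod_type,
    mul_comm]

theorem hsNorm_eq_norm (F : 𝕄 q → 𝕄 q) : hsNorm q F = ‖hsVec F‖ := by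
  rw [hsNorm, hsInner_eq_inner, norm_eq_sqrt_real_inner]

theorem hsVec_add (F G : 𝕄 q → 𝕄 q) : hsVec (fun X => F X + G X) = hsVec F + hsVec G := rfl

theorem hsVec_sub (F G : 𝕄 q → 𝕄 q) : hsVec (fun X => F X - G X) = hsVec F - hsVec G := rfl

theorem hsNorm_sub_le (F G : 𝕄 q → 𝕄 q) :
    hsNorm q (fun X => F X - G X) ≤ hsNorm q F + hsNorm q G := by
  simp only [hsNorm_eq_norm, hsVec_sub]
  exact norm_sub_le _ _

theorem hsNorm_add_sq_of_hsInner_eq_zero {F G : 𝕄 q → 𝕄 q} (h : hsInner q F G = 0) :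
    hsNorm q (fun X => F X + G X) ^ 2 = hsNorm q F ^ 2 + hsNorm q G ^ 2 := by
  rw [hsInner_eq_inner] at h
  simp only [hsNorm_eq_norm, hsVec_add]
  simpa only [← sq] using norm_add_sq_eq_norm_sq_add_norm_sq_real h

def coordMatrix (F : 𝕄 q → 𝕄 q) (c d : Fin q) : 𝕄 q :=
  Matrix.of fun i j => F (Matrix.single i j 1) c d

theorem hsNorm_sq_eq_sum_coordMatrix (F : 𝕄 q → 𝕄 q) :
    hsNorm q F ^ 2 = ∑ c, ∑ d, ‖coordMatrix F c d‖ ^ 2 := by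
  rw [hsNorm_eq_norm, EuclideanSpace.norm_sq_eq, Fintype.sum_prod_type, Finset.sum_comm]
  simp only [Matrix.frobenius_norm_sq_eq_sum, coordMatrix, hsVec, Matrix.of_apply,
    Real.norm_eq_abs, sq_abs, Fintype.sum_prod_type]

theorem apply_apply_eq_sum_coordMatrix (P : 𝕄 q →ₗ[ℝ] 𝕄 q) (Z : 𝕄 q) (c d : Fin q) :
    P Z c d = ∑ i, ∑ j, Z i j * coordMatrix P c d i j := by
  conv_lhs => rw [Z.matrix_eq_sum_single]
  have hsingle : ∀ i j, Matrix.single i j (Z i j) = Z i j • Matrix.single i j (1 : ℝ) := by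
    simp [Matrix.smul_single]
  simp only [Matrix.sum_apply, map_sum, hsingle, map_smul, Matrix.smul_apply, smul_eq_mul,
    coordMatrix, Matrix.of_apply]

theorem coordMatrix_comp_mul_mul_transpose_sub (P : 𝕄 q →ₗ[ℝ] 𝕄 q) (A B : 𝕄 q) (c d : Fin q) :
    coordMatrix (fun Y => P (A * Y * Bᵀ - Y)) c d =
      Aᵀ * coordMatrix P c d * B - coordMatrix P c d := by
  ext a b
  rw [coordMatrix, Matrix.of_apply, apply_apply_eq_sum_coordMatrix]
  simp only [single, ite_and, Matrix.sub_apply, Matrix.mul_apply, of_apply, mul_ite, mul_one,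
    mul_zero, sum_ite_eq, mem_univ, ↓reduceIte, transpose_apply, ite_mul, zero_mul, sub_mul,
    one_mul, sum_sub_distrib, sum_ite_irrel, sum_const_zero, sum_mul, sub_left_inj]
  rw [Finset.sum_comm]
  exact Finset.sum_congr rfl fun j _ => Finset.sum_congr rfl fun i _ => by ring

theorem hsNorm_comp_mul_mul_transpose_sub_le (P : 𝕄 q →ₗ[ℝ] 𝕄 q) (A B : 𝕄 q) :
    hsNorm q (fun Y => P (A * Y * Bᵀ - Y)) ≤
      (‖A - 1‖ * ‖B - 1‖ + ‖A - 1‖ + ‖B - 1‖) * hsNorm q P := by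
  set κ := ‖A - 1‖ * ‖B - 1‖ + ‖A - 1‖ + ‖B - 1‖
  have hG : ∀ G : 𝕄 q, ‖Aᵀ * G * B - G‖ ^ 2 ≤ κ ^ 2 * ‖G‖ ^ 2 := fun G => by
    rw [← mul_pow]
    gcongr
    simpa only [Matrix.norm_transpose_sub_one] using norm_mul_mul_sub_le Aᵀ G B
  refine (pow_le_pow_iff_left₀ (hsNorm_nonneg _) (mul_nonneg (by positivity) (hsNorm_nonneg _))
    two_ne_zero).mp ?_
  rw [mul_pow, hsNorm_sq_eq_sum_coordMatrix, hsNorm_sq_eq_sum_coordMatrix, Finset.mul_sum]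
  simp_rw [coordMatrix_comp_mul_mul_transpose_sub, Finset.mul_sum]
  gcongr with c _ d _
  exact hG _

theorem hsNorm_mul_mul_transpose (A B : 𝕄 q) :
    hsNorm q (fun X => A * X * Bᵀ) = ‖A‖ * ‖B‖ := by
  refine (sq_eq_sq₀ (hsNorm_nonneg _) (by positivity)).mp ?_
  have hentry : ∀ i j c d, (A * Matrix.single i j (1 : ℝ) * Bᵀ) c d = A c i * B d j := by
    simp [Matrix.mul_apply, Matrix.single, ite_and]
  rw [mul_pow, hsNorm_sq_eq_sum_coordMatrix, Matrix.frobenius_norm_sq_eq_sum A,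
    Matrix.frobenius_norm_sq_eq_sum B, Finset.sum_mul_sum]
  simp only [Matrix.frobenius_norm_sq_eq_sum, coordMatrix, Matrix.of_apply, hentry, mul_pow,
    Finset.sum_mul_sum]

theorem hsNorm_sq_mul_add_mul_transpose (A B : 𝕄 q) :
    hsNorm q (fun X => A * X + X * Bᵀ) ^ 2 =
      q * ‖A‖ ^ 2 + q * ‖B‖ ^ 2 + 2 * Matrix.trace A * Matrix.trace B := by
  have hentry : ∀ i j c d, (A * Matrix.single i j (1 : ℝ) + Matrix.single i j (1 : ℝ) * Bᵀ) c d =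
      (if j = d then A c i else 0) + (if i = c then B d j else 0) := by
    simp [Matrix.mul_apply, Matrix.single, ite_and]
  have hsq : ∀ i j c d : Fin q,
      ((if j = d then A c i else 0) + (if i = c then B d j else 0)) ^ 2 =
        (if j = d then A c i ^ 2 else 0) + (if i = c then B d j ^ 2 else 0) +
          (if j = d then (if i = c then 2 * A c i * B d j else 0) else 0) := by
    intro i j c d
    split_ifs <;> ring
  rw [hsNorm_sq_eq_sum_coordMatrix]
  simp only [Matrix.frobenius_norm_sq_eq_sum, coordMatrix, Matrix.of_apply, hentry, hsq,
    Finset.sum_add_distrib, Finset.sum_ite_eq', Finset.sum_ite_irrel, Finset.sum_const_zero,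
    Finset.mem_univ, if_true]
  simp only [sum_const, card_univ, Fintype.card_fin, nsmul_eq_mul, mul_sum, mul_assoc, trace,
    diag_apply, sum_mul, add_right_inj]
  exact Finset.sum_comm

theorem exists_trace_eq_zero_mul_add_mul_transpose_eq (hq : q ≠ 0) (W₁ W₂ : 𝕄 q) :
    ∃ EL ER : 𝕄 q, Matrix.trace ER = 0 ∧ ∀ X, EL * X + X * ERᵀ = W₁ * X + X * W₂ᵀ := by
  set c := Matrix.trace W₂ / q
  refine ⟨W₁ + c • 1, W₂ - c • 1, ?_, fun X => ?_⟩
  · simp [c, Matrix.trace_sub, Matrix.trace_smul, Matrix.trace_one, hq]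
  · simp only [Matrix.transpose_sub, Matrix.transpose_smul, Matrix.transpose_one, add_mul,
      Matrix.mul_sub, Matrix.smul_mul, Matrix.mul_smul, Matrix.one_mul, Matrix.mul_one]
    abel

theorem exists_normalized_decomposition (hq : 0 < q) {D Pperp : 𝕄 q →ₗ[ℝ] 𝕄 q}
    (hPmem : ∃ W₁ W₂ : 𝕄 q, ∀ X, D X - Pperp X = W₁ * X + X * W₂ᵀ)
    (hPorth : ∀ W₁ W₂ : 𝕄 q, hsInner q (⇑Pperp) (fun X => W₁ * X + X * W₂ᵀ) = 0) :
    ∃ EL ER : 𝕄 q, ‖EL‖ ≤ hsNorm q D / √q ∧ ‖ER‖ ≤ hsNorm q D / √q ∧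
      hsNorm q Pperp ≤ hsNorm q D ∧ ∀ X, D X = Pperp X + (EL * X + X * ERᵀ) := by
  obtain ⟨W₁, W₂, hW⟩ := hPmem
  obtain ⟨EL, ER, htrace, hE⟩ := exists_trace_eq_zero_mul_add_mul_transpose_eq hq.ne' W₁ W₂
  have hD : ∀ X, D X = Pperp X + (EL * X + X * ERᵀ) := fun X => by rw [hE, ← hW]; abel
  have hpyth : hsNorm q D ^ 2 = hsNorm q Pperp ^ 2 + (q * ‖EL‖ ^ 2 + q * ‖ER‖ ^ 2) := by
    rw [show ⇑D = fun X => Pperp X + (EL * X + X * ERᵀ) from funext hD,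
      hsNorm_add_sq_of_hsInner_eq_zero (hPorth EL ER), hsNorm_sq_mul_add_mul_transpose, htrace]
    ring
  have hbound : ∀ {a : ℝ}, 0 ≤ a → q * a ^ 2 ≤ hsNorm q D ^ 2 → a ≤ hsNorm q D / √q :=
    fun ha h => by
      rw [le_div_iff₀ (by positivity)]
      refine (pow_le_pow_iff_left₀ (by positivity) (hsNorm_nonneg _) two_ne_zero).mp ?_
      rwa [mul_pow, Real.sq_sqrt q.cast_nonneg, mul_comm]
  refine ⟨EL, ER, hbound (norm_nonneg _) ?_, hbound (norm_nonneg _) ?_, ?_, hD⟩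
  · nlinarith [sq_nonneg (hsNorm q Pperp), sq_nonneg ‖ER‖]
  · nlinarith [sq_nonneg (hsNorm q Pperp), sq_nonneg ‖EL‖]
  · refine (pow_le_pow_iff_left₀ (hsNorm_nonneg _) (hsNorm_nonneg _) two_ne_zero).mp ?_
    nlinarith [sq_nonneg ‖ER‖, sq_nonneg ‖EL‖]

/-- `(I + D) ∘ 𝒲⁻¹ - I - P` for `𝒲⁻¹ X = L X Rᵀ`, simplified with `(1 - L) (1 + E_L) = E_L`. -/
noncomputable def factorizationRemainder (P : 𝕄 q →ₗ[ℝ] 𝕄 q) (L R : 𝕄 q) : 𝕄 q →ₗ[ℝ] 𝕄 q :=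
  P ∘ₗ (LinearMap.mulLeftRight ℝ (L, Rᵀ) - LinearMap.id) -
    LinearMap.mulLeftRight ℝ (1 - L, (1 - R)ᵀ)

theorem factorizationRemainder_apply (P : 𝕄 q →ₗ[ℝ] 𝕄 q) (L R Y : 𝕄 q) :
    factorizationRemainder P L R Y = P (L * Y * Rᵀ - Y) - (1 - L) * Y * (1 - R)ᵀ := rfl

theorem add_apply_eq_factorization (P : 𝕄 q →ₗ[ℝ] 𝕄 q) {EL ER L R : 𝕄 q} (hL : L * (1 + EL) = 1)
    (hR : R * (1 + ER) = 1) (X : 𝕄 q) :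
    X + (P X + (EL * X + X * ERᵀ)) = (1 + EL) * X * (1 + ER)ᵀ + P ((1 + EL) * X * (1 + ER)ᵀ) +
      factorizationRemainder P L R ((1 + EL) * X * (1 + ER)ᵀ) := by
  have hinv : L * ((1 + EL) * X * (1 + ER)ᵀ) * Rᵀ = X := by
    rw [← Matrix.mul_assoc, ← Matrix.mul_assoc, hL, Matrix.mul_assoc, ← Matrix.transpose_mul, hR]
    simp
  have hL' : (1 - L) * (1 + EL) = EL := by rw [sub_mul, hL]; noncomm_ring
  have hR' : (1 - R) * (1 + ER) = ER := by rw [sub_mul, hR]; noncomm_ring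
  have hrem : (1 - L) * ((1 + EL) * X * (1 + ER)ᵀ) * (1 - R)ᵀ = EL * X * ERᵀ := by
    rw [← Matrix.mul_assoc, ← Matrix.mul_assoc, hL', Matrix.mul_assoc, ← Matrix.transpose_mul, hR']
  rw [factorizationRemainder_apply, hinv, hrem, map_sub, Matrix.transpose_add, Matrix.transpose_one]
  noncomm_ring

theorem hsNorm_factorizationRemainder_le (P : 𝕄 q →ₗ[ℝ] 𝕄 q) (L R : 𝕄 q) :
    hsNorm q (factorizationRemainder P L R) ≤
      (‖L - 1‖ * ‖R - 1‖ + ‖L - 1‖ + ‖R - 1‖) * hsNorm q P + ‖L - 1‖ * ‖R - 1‖ := by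
  rw [show ⇑(factorizationRemainder P L R) =
      fun Y => P (L * Y * Rᵀ - Y) - (1 - L) * Y * (1 - R)ᵀ from
    funext (factorizationRemainder_apply P L R)]
  refine (hsNorm_sub_le _ _).trans (add_le_add (hsNorm_comp_mul_mul_transpose_sub_le P L R) ?_)
  rw [hsNorm_mul_mul_transpose, norm_sub_rev 1 L, norm_sub_rev 1 R]

end HilbertSchmidt

/-- Suppose `D` is a linear operator on `ℝ^{q×q}` with Hilbert–Schmidt norm `‖D‖ ≤ 1/10`, and
let `Pperp = P_{W⊥}(D)` be the component of `D` orthogonal to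
`W = span{I ⊗ W₁ + W₂ ⊗ I}` (whose elements act by `X ↦ W₁ X + X W₂ᵀ`).  Then
`I + D = (I + Pperp + M) ∘ 𝒲` where `‖M‖ ≤ 5‖D‖²/√q` and `𝒲 = (I+E_R) ⊗ (I+E_L)` is a
rank-preserver (acting by `X ↦ (I+E_L) X (I+E_R)ᵀ`) with `‖𝒲 − I‖₂ ≤ 3‖D‖/√q`. -/
theorem linearize_rank_preserver_manifold (q : ℕ) (hq : 0 < q)
    (D Pperp : Matrix (Fin q) (Fin q) ℝ →ₗ[ℝ] Matrix (Fin q) (Fin q) ℝ)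
    (hD : hsNorm q (⇑D) ≤ 1 / 10)
    (hPmem : ∃ W₁ W₂ : Matrix (Fin q) (Fin q) ℝ, ∀ X, D X - Pperp X = W₁ * X + X * W₂ᵀ)
    (hPorth : ∀ W₁ W₂ : Matrix (Fin q) (Fin q) ℝ,
      hsInner q (⇑Pperp) (fun X => W₁ * X + X * W₂ᵀ) = 0) :
    ∃ (M : Matrix (Fin q) (Fin q) ℝ →ₗ[ℝ] Matrix (Fin q) (Fin q) ℝ)
      (EL ER : Matrix (Fin q) (Fin q) ℝ),
      hsNorm q (⇑M) ≤ 5 * (hsNorm q (⇑D)) ^ 2 / Real.sqrt q ∧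
      (∀ X : Matrix (Fin q) (Fin q) ℝ,
        Real.sqrt (Matrix.trace (((1 + EL) * X * (1 + ER)ᵀ - X)ᵀ *
            ((1 + EL) * X * (1 + ER)ᵀ - X))) ≤
          (3 * hsNorm q (⇑D) / Real.sqrt q) * Real.sqrt (Matrix.trace (Xᵀ * X))) ∧
      (∀ X : Matrix (Fin q) (Fin q) ℝ,
        X + D X = (1 + EL) * X * (1 + ER)ᵀ + Pperp ((1 + EL) * X * (1 + ER)ᵀ) +
          M ((1 + EL) * X * (1 + ER)ᵀ)) := by
  obtain ⟨EL, ER, hEL, hER, hP, hDX⟩ := exists_normalized_decomposition hq hPmem hPorth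
  set d := hsNorm q D
  set ε := d / √q
  have hd : 0 ≤ d := hsNorm_nonneg _
  have hε : 0 ≤ ε := by positivity
  have hεd : ε ≤ d := div_le_self hd (Real.one_le_sqrt.mpr (by exact_mod_cast hq))
  obtain ⟨L, hL, hLn⟩ := exists_mul_one_add_eq_one_of_norm_lt_one (e := EL) (by linarith)
  obtain ⟨R, hR, hRn⟩ := exists_mul_one_add_eq_one_of_norm_lt_one (e := ER) (by linarith)
  have hL' : ‖L - 1‖ ≤ 10 / 9 * ε := by nlinarith [norm_nonneg (L - 1)]
  have hR' : ‖R - 1‖ ≤ 10 / 9 * ε := by nlinarith [norm_nonneg (R - 1)]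
  refine ⟨factorizationRemainder Pperp L R, EL, ER, ?_, fun X => ?_, fun X => ?_⟩
  · calc hsNorm q (factorizationRemainder Pperp L R)
        ≤ (‖L - 1‖ * ‖R - 1‖ + ‖L - 1‖ + ‖R - 1‖) * hsNorm q Pperp + ‖L - 1‖ * ‖R - 1‖ :=
          hsNorm_factorizationRemainder_le Pperp L R
      _ ≤ 5 * ε * d := by
          nlinarith [mul_le_mul hL' hR' (norm_nonneg _) (by positivity), norm_nonneg (L - 1),
            norm_nonneg (R - 1), hsNorm_nonneg Pperp]
      _ = 5 * d ^ 2 / √q := by ring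
  · rw [Matrix.sqrt_trace_transpose_mul_self, Matrix.sqrt_trace_transpose_mul_self]
    calc ‖(1 + EL) * X * (1 + ER)ᵀ - X‖ ≤ (‖EL‖ * ‖ER‖ + ‖EL‖ + ‖ER‖) * ‖X‖ := by
          simpa [Matrix.frobenius_norm_transpose] using norm_mul_mul_sub_le (1 + EL) X (1 + ER)ᵀ
      _ ≤ 3 * ε * ‖X‖ := by gcongr; nlinarith [norm_nonneg EL, norm_nonneg ER]
      _ = 3 * d / √q * ‖X‖ := by ring
  · rw [hDX]
    exact add_apply_eq_factorization Pperp hL hR X
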